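/- arXiv:2007.06018 — 3 statements merged into one kernel-verified Lean document; each statement's English description precedes it below -/
import Mathlib

section
/- Let S be a countable type, let q and p be probability mass functions on S with p(s) = r(s)·q(s) for all s ∈ S, let f : ℝ → ℝ be convex and differentiable, and let r_ψ : S → ℝ. Assume the summability of s ↦ q(s)·f(r(s)), s ↦ p(s)·f′(r_ψ(s)), s ↦ q(s)·r_ψ(s)·f′(r_ψ(s)), and s ↦ q(s)·f(r_ψ(s)). Then ∑_s p(s)·f′(r_ψ(s)) − ∑_s q(s)·[r_ψ(s)·f′(r_ψ(s)) − f(r_ψ(s))] ≤ ∑_s q(s)·f(r(s)); that is, the variational objective E_p[f′(r_ψ)] − E_q[r_ψ·f′(r_ψ) − f(r_ψ)] is a lower bound on the f-divergence D_f(p ‖ q). -/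
/-!
The gap between `D_f(p ‖ q)` and the variational objective is, term by term, `q s` times the
Bregman divergence of `f` between `r s` and `r_ψ s`. Each such Bregman divergence
is nonnegative because the graph of the convex `f` lies above its tangent lines, and `q ≥ 0`.
-/

open Set

theorem ConvexOn.add_mul_sub_le_of_hasDerivAt {S : Set ℝ} {f : ℝ → ℝ} {f' x y : ℝ}
    (hfc : ConvexOn ℝ S f) (hx : x ∈ S) (hy : y ∈ S) (hf : HasDerivAt f f' x) :
    f x + f' * (y - x) ≤ f y := by
  rcases lt_trichotomy x y with hxy | rfl | hyx
  · have hslope := hfc.le_slope_of_hasDerivAt hx hy hxy hf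
    rw [slope_def_field, le_div_iff₀ (sub_pos.mpr hxy)] at hslope
    linarith
  · simp
  · have hslope := hfc.slope_le_of_hasDerivAt hy hx hyx hf
    rw [slope_def_field, div_le_iff₀ (sub_pos.mpr hyx)] at hslope
    linarith

def bregmanDiv (f f' : ℝ → ℝ) (x y : ℝ) : ℝ :=
  f x - f y - f' y * (x - y)

theorem bregmanDiv_nonneg {S : Set ℝ} {f f' : ℝ → ℝ} {x y : ℝ} (hfc : ConvexOn ℝ S f)
    (hx : x ∈ S) (hy : y ∈ S) (hf : HasDerivAt f (f' y) y) :
    0 ≤ bregmanDiv f f' x y := by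
  have := hfc.add_mul_sub_le_of_hasDerivAt hy hx hf
  unfold bregmanDiv
  linarith

theorem mul_sub_variational_term_eq_mul_bregmanDiv (f f' : ℝ → ℝ) (q r ρ : ℝ) :
    q * f r - (r * q * f' ρ - q * (ρ * f' ρ - f ρ)) = q * bregmanDiv f f' r ρ := by
  unfold bregmanDiv
  ring

theorem f_divergence_variational_lower_bound_general
    {S : Type*}
    (q p : S → ℝ) (r rpsi : S → ℝ)
    (hq0 : ∀ s, 0 ≤ q s)
    (hpr : ∀ s, p s = r s * q s)
    (f f' : ℝ → ℝ)
    (hconv : ConvexOn ℝ Set.univ f)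
    (hderiv : ∀ x, HasDerivAt f (f' x) x)
    (h1 : Summable (fun s => q s * f (r s)))
    (h2 : Summable (fun s => p s * f' (rpsi s)))
    (h3 : Summable (fun s => q s * (rpsi s * f' (rpsi s))))
    (h4 : Summable (fun s => q s * f (rpsi s))) :
    ∑' s, p s * f' (rpsi s) - ∑' s, q s * (rpsi s * f' (rpsi s) - f (rpsi s))
      ≤ ∑' s, q s * f (r s) := by
  have hobj : Summable fun s => q s * (rpsi s * f' (rpsi s) - f (rpsi s)) := by
    simpa only [mul_sub] using h3.sub h4
  have hgap : ∑' s, q s * f (r s)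
      - (∑' s, p s * f' (rpsi s) - ∑' s, q s * (rpsi s * f' (rpsi s) - f (rpsi s)))
      = ∑' s, q s * bregmanDiv f f' (r s) (rpsi s) := by
    rw [← h2.tsum_sub hobj, ← h1.tsum_sub (h2.sub hobj)]
    simp only [hpr, mul_sub_variational_term_eq_mul_bregmanDiv]
  have hnonneg : 0 ≤ ∑' s, q s * bregmanDiv f f' (r s) (rpsi s) :=
    tsum_nonneg fun s =>
      mul_nonneg (hq0 s) (bregmanDiv_nonneg hconv (mem_univ _) (mem_univ _) (hderiv _))
  linarith

/-- Variational lower bound on the f-divergence (Proposition 2, inequality part):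
`E_p[f′(r_ψ)] − E_q[r_ψ·f′(r_ψ) − f(r_ψ)] ≤ E_q[f(p/q)] = D_f(p ‖ q)`
for convex differentiable `f`, where `p = r·q`. -/
theorem f_divergence_variational_lower_bound
    {S : Type*} [Countable S]
    (q p : S → ℝ) (r rpsi : S → ℝ)
    (hq0 : ∀ s, 0 ≤ q s) (hq1 : HasSum q 1)
    (hp0 : ∀ s, 0 ≤ p s) (hp1 : HasSum p 1)
    (hpr : ∀ s, p s = r s * q s)
    (f f' : ℝ → ℝ)
    (hconv : ConvexOn ℝ Set.univ f)
    (hderiv : ∀ x, HasDerivAt f (f' x) x)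
    (h1 : Summable (fun s => q s * f (r s)))
    (h2 : Summable (fun s => p s * f' (rpsi s)))
    (h3 : Summable (fun s => q s * (rpsi s * f' (rpsi s))))
    (h4 : Summable (fun s => q s * f (rpsi s))) :
    ∑' s, p s * f' (rpsi s) - ∑' s, q s * (rpsi s * f' (rpsi s) - f (rpsi s))
      ≤ ∑' s, q s * f (r s) :=
  f_divergence_variational_lower_bound_general q p r rpsi hq0 hpr f f' hconv hderiv h1 h2 h3 h4
end

section
/- Let S be a countable type, let q and p be probability mass functions on S with p(s) = r(s)·q(s) for all s ∈ S, and let r_ψ : S → ℝ. Take f(t) = (t−1)²/2. Assuming the summability of s ↦ q(s)·(r(s)−1)², s ↦ q(s)·r_ψ(s)², and s ↦ p(s)·r_ψ(s), the integrated Bregman divergence satisfies BD_f(r ‖ r_ψ) = ∑_s q(s)·(r(s)−1)²/2 + (1/2)·∑_s q(s)·(r_ψ(s)² − 1) − ∑_s p(s)·(r_ψ(s) − 1). In particular, minimizing BD_f over r_ψ is equivalent, up to an additive constant independent of r_ψ, to minimizing (1/2)·E_q[r_ψ² − 1] − E_p[r_ψ − 1]. -/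
/-! For `f(t) = (t - 1)² / 2` the Bregman divergence is `f(a) - f(b) - f'(b)(a - b) = (a - b)² / 2`,
which expands as `(a - 1)² / 2 + (b² - 1) / 2 - a (b - 1)`. Weighting by `q` and using `r q = p`
turns the last term into `p (r_ψ - 1)`, and the three resulting series are summed separately. -/

lemma leastSquares_bregman_expand (a b : ℝ) :
    (a - 1) ^ 2 / 2 - (b - 1) ^ 2 / 2 - (b - 1) * (a - b) =
      (a - 1) ^ 2 / 2 + (1 / 2) * (b ^ 2 - 1) - a * (b - 1) := by
  ring

lemma Summable.mul_sub_one {ι : Type*} {w g : ι → ℝ} (hwg : Summable fun i => w i * g i)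
    (hw : Summable w) : Summable fun i => w i * (g i - 1) := by
  simpa only [mul_sub, mul_one] using hwg.sub hw

lemma tsum_add_const_mul_sub {ι : Type*} {f g h : ι → ℝ} (c : ℝ) (hf : Summable f)
    (hg : Summable g) (hh : Summable h) :
    ∑' i, (f i + c * g i - h i) = ∑' i, f i + c * ∑' i, g i - ∑' i, h i := by
  rw [(hf.add (hg.mul_left c)).tsum_sub hh, hf.tsum_add (hg.mul_left c), tsum_mul_left]

theorem bregman_least_squares_objective_general
    {S : Type*}
    (q p : S → ℝ) (r rpsi : S → ℝ)
    (hq1 : HasSum q 1)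
    (hp1 : HasSum p 1)
    (hpr : ∀ s, p s = r s * q s)
    (h1 : Summable (fun s => q s * (r s - 1) ^ 2))
    (h2 : Summable (fun s => q s * rpsi s ^ 2))
    (h3 : Summable (fun s => p s * rpsi s)) :
    ∑' s, q s * ((r s - 1) ^ 2 / 2 - (rpsi s - 1) ^ 2 / 2 - (rpsi s - 1) * (r s - rpsi s)) =
      ∑' s, q s * (r s - 1) ^ 2 / 2
        + (1 / 2) * ∑' s, q s * (rpsi s ^ 2 - 1)
        - ∑' s, p s * (rpsi s - 1) := by
  have pointwise : ∀ s,
      q s * ((r s - 1) ^ 2 / 2 - (rpsi s - 1) ^ 2 / 2 - (rpsi s - 1) * (r s - rpsi s)) =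
        q s * (r s - 1) ^ 2 / 2 + (1 / 2) * (q s * (rpsi s ^ 2 - 1)) - p s * (rpsi s - 1) := by
    intro s
    rw [leastSquares_bregman_expand, hpr]
    ring
  rw [tsum_congr pointwise]
  exact tsum_add_const_mul_sub _ (h1.div_const 2) (h2.mul_sub_one hq1.summable)
    (h3.mul_sub_one hp1.summable)

/-- Least-squares row of Table 4: for `f(t) = (t−1)²/2` (so `f′(t) = t−1`), the integrated
Bregman divergence decomposes as
`BD_f(r ‖ r_ψ) = E_q[(r−1)²/2] + (1/2)·E_q[r_ψ² − 1] − E_p[r_ψ − 1]`, where `p = r·q`;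
hence minimizing `BD_f` over `r_ψ` is minimizing `(1/2)·E_q[r_ψ²−1] − E_p[r_ψ−1]`
up to a constant. -/
theorem bregman_least_squares_objective
    {S : Type*} [Countable S]
    (q p : S → ℝ) (r rpsi : S → ℝ)
    (hq0 : ∀ s, 0 ≤ q s) (hq1 : HasSum q 1)
    (hp0 : ∀ s, 0 ≤ p s) (hp1 : HasSum p 1)
    (hpr : ∀ s, p s = r s * q s)
    (h1 : Summable (fun s => q s * (r s - 1) ^ 2))
    (h2 : Summable (fun s => q s * rpsi s ^ 2))
    (h3 : Summable (fun s => p s * rpsi s)) :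
    ∑' s, q s * ((r s - 1) ^ 2 / 2 - (rpsi s - 1) ^ 2 / 2 - (rpsi s - 1) * (r s - rpsi s)) =
      ∑' s, q s * (r s - 1) ^ 2 / 2
        + (1 / 2) * ∑' s, q s * (rpsi s ^ 2 - 1)
        - ∑' s, p s * (rpsi s - 1) :=
  bregman_least_squares_objective_general q p r rpsi hq1 hp1 hpr h1 h2 h3
end

section
/- Let S be a countable type, let q and p be probability mass functions on S with p(s) = r(s)·q(s) for all s ∈ S, with r(s) > 0 on the support of q, and let r_ψ : S → ℝ satisfy r_ψ(s) > 0 for all s. Take f(t) = t·log t − (1+t)·log(1+t) on (0,∞). Assuming the summability of s ↦ q(s)·f(r(s)), s ↦ q(s)·log(1 + r_ψ(s)), and s ↦ p(s)·log(r_ψ(s)/(1 + r_ψ(s))), the integrated Bregman divergence satisfies BD_f(r ‖ r_ψ) = ∑_s q(s)·f(r(s)) + ∑_s q(s)·log(1 + r_ψ(s)) − ∑_s p(s)·log(r_ψ(s)/(1 + r_ψ(s))). In particular, minimizing BD_f over r_ψ is equivalent, up to an additive constant independent of r_ψ, to minimizing E_q[log(1 + r_ψ)] − E_p[log(r_ψ/(1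 + r_ψ))]. -/
/-!
Pointwise, the Bregman integrand splits as `q f(r) + q (t f'(t) - f(t)) - (r q) f'(t)`, and for the
logistic generator `t f'(t) - f(t) = log (1 + t)`; the three resulting series are summable, so the
sum splits accordingly.
-/

open Real

lemma bregman_integrand_eq (f f' : ℝ → ℝ) (q r t : ℝ) :
    q * (f r - f t - f' t * (r - t)) = q * f r + q * (t * f' t - f t) - r * q * f' t := by
  ring

lemma tsum_bregman_integrand_eq {S : Type*} (f f' : ℝ → ℝ) (q r t : S → ℝ)
    (hr : Summable fun s => q s * f (r s))
    (ht : Summable fun s => q s * (t s * f' (t s) - f (t s)))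
    (hcross : Summable fun s => r s * q s * f' (t s)) :
    ∑' s, q s * (f (r s) - f (t s) - f' (t s) * (r s - t s)) =
      ∑' s, q s * f (r s) + ∑' s, q s * (t s * f' (t s) - f (t s))
        - ∑' s, r s * q s * f' (t s) := by
  simp only [bregman_integrand_eq]
  rw [(hr.add ht).tsum_sub hcross, hr.tsum_add ht]

/-- Holds for every real `t`: at `t = 0` both sides vanish, and at `t = -1` every logarithm
involved is `log 0 = 0` or `log (-1) = 0`. -/
lemma Real.mul_log_div_one_add (t : ℝ) :
    t * log (t / (1 + t)) = t * log t - t * log (1 + t) := by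
  rcases eq_or_ne t 0 with rfl | ht
  · simp
  rcases eq_or_ne (1 + t) 0 with h | h
  · obtain rfl : t = -1 := by linarith
    norm_num
  · rw [log_div ht h]
    ring

lemma logistic_mul_deriv_sub (t : ℝ) :
    t * log (t / (1 + t)) - (t * log t - (1 + t) * log (1 + t)) = log (1 + t) := by
  rw [Real.mul_log_div_one_add]
  ring

theorem bregman_logistic_objective_general
    {S : Type*}
    (q p : S → ℝ) (r rpsi : S → ℝ)
    (hpr : ∀ s, p s = r s * q s)
    (f : ℝ → ℝ) (hf : ∀ t, f t = t * log t - (1 + t) * log (1 + t))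
    (h1 : Summable (fun s => q s * f (r s)))
    (h2 : Summable (fun s => q s * log (1 + rpsi s)))
    (h3 : Summable (fun s => p s * log (rpsi s / (1 + rpsi s)))) :
    ∑' s, q s * (f (r s) - f (rpsi s) - log (rpsi s / (1 + rpsi s)) * (r s - rpsi s)) =
      ∑' s, q s * f (r s)
        + ∑' s, q s * log (1 + rpsi s)
        - ∑' s, p s * log (rpsi s / (1 + rpsi s)) := by
  have hlogistic : ∀ t, t * log (t / (1 + t)) - f t = log (1 + t) := fun t => by
    rw [hf, logistic_mul_deriv_sub]
  obtain rfl : p = fun s => r s * q s := funext hpr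
  have h2' : Summable fun s => q s * (rpsi s * log (rpsi s / (1 + rpsi s)) - f (rpsi s)) := by
    simpa only [hlogistic] using h2
  simpa only [hlogistic] using
    tsum_bregman_integrand_eq f (fun t => log (t / (1 + t))) q r rpsi h1 h2' h3

open Real in
/-- Logistic row of Table 4: for `f(t) = t·log t − (1+t)·log(1+t)`
(so `f′(t) = log(t/(1+t))` and `t·f′(t) − f(t) = log(1+t)`), the integrated Bregman
divergence decomposes as
`BD_f(r ‖ r_ψ) = E_q[f(r)] + E_q[log(1+r_ψ)] − E_p[log(r_ψ/(1+r_ψ))]`, where `p = r·q`;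
hence minimizing `BD_f` over `r_ψ` is minimizing
`E_q[log(1+r_ψ)] − E_p[log(r_ψ/(1+r_ψ))]` up to a constant. -/
theorem bregman_logistic_objective
    {S : Type*} [Countable S]
    (q p : S → ℝ) (r rpsi : S → ℝ)
    (hq0 : ∀ s, 0 ≤ q s) (hq1 : HasSum q 1)
    (hp0 : ∀ s, 0 ≤ p s) (hp1 : HasSum p 1)
    (hpr : ∀ s, p s = r s * q s)
    (hr : ∀ s, 0 < q s → 0 < r s)
    (hrpsi : ∀ s, 0 < rpsi s)
    (f : ℝ → ℝ) (hf : ∀ t, f t = t * log t - (1 + t) * log (1 + t))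
    (h1 : Summable (fun s => q s * f (r s)))
    (h2 : Summable (fun s => q s * log (1 + rpsi s)))
    (h3 : Summable (fun s => p s * log (rpsi s / (1 + rpsi s)))) :
    ∑' s, q s * (f (r s) - f (rpsi s) - log (rpsi s / (1 + rpsi s)) * (r s - rpsi s)) =
      ∑' s, q s * f (r s)
        + ∑' s, q s * log (1 + rpsi s)
        - ∑' s, p s * log (rpsi s / (1 + rpsi s)) :=
  bregman_logistic_objective_general q p r rpsi hpr f hf h1 h2 h3
end
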